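/- Let G₀ be a finite graph with maximal vertex degree d, J ≥ 0, and p₁, p₂ ∈ (0,1) with p₂ < e^{-dJ}/(e^{dJ}+e^{-dJ}) and p₁ > e^{dJ}/(e^{dJ}+e^{-dJ}). Let ν_i be the product (Bernoulli) measure on {-1,+1}^{V₀} assigning +1 to each vertex independently with probability p_i, and let μ be the Ising measure with coupling constant J on G₀. Then ν₂ ≼ μ ≼ ν₁ in the sense of stochastic domination. -/
import Mathlib


open Real

def spin (b : Bool) : ℝ := if b then 1 else -1

noncomputable def isingWeight {V : Type*} (E : Finset (V × V)) (J : ℝ)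
    (σ : V → Bool) : ℝ :=
  Real.exp (J * ∑ e ∈ E, spin (σ e.1) * spin (σ e.2))

/-- Product Bernoulli measure on spin configurations: each vertex is `+1` (i.e. `true`)
independently with probability `p`. -/
noncomputable def bernoulliMeasure {V : Type*} [Fintype V] (p : ℝ) (σ : V → Bool) : ℝ :=
  ∏ v : V, (if σ v then p else 1 - p)


open Real Finset

lemma flip_invol {V : Type*} [DecidableEq V] (v : V) :
    Function.Involutive (fun σ : V → Bool => Function.update σ v (!σ v)) := by
  intro σ
  simp only [Function.update_self, Bool.not_not, Function.update_idem]
  exact Function.update_eq_self v σ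

lemma key_ind {V : Type*} [Fintype V] [DecidableEq V] (p : ℝ) (hp : 0 < p) (hp' : p < 1)
    (f : (V → Bool) → ℝ) (hf : ∀ σ, 0 ≤ f σ)
    (A : Set (V → Bool)) [DecidablePred (· ∈ A)]
    (hA : ∀ ω ω' : V → Bool, ω ∈ A → ω ≤ ω' → ω' ∈ A)
    (S : Finset V)
    (hcond : ∀ v ∈ S, ∀ η : V → Bool,
      p * f (Function.update η v false) ≤ (1 - p) * f (Function.update η v true))
    (τ : V → Bool) :
    (∑ σ : V → Bool, if ∀ u ∉ S, σ u = τ u then f σ else 0) *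
      (∑ σ : V → Bool, if (∀ u ∉ S, σ u = τ u) ∧ σ ∈ A
          then ∏ v ∈ S, (if σ v then p else 1 - p) else 0)
      ≤ ∑ σ : V → Bool, if (∀ u ∉ S, σ u = τ u) ∧ σ ∈ A then f σ else 0 := by
  induction S using Finset.induction_on generalizing τ with
  | empty =>
    have he : ∀ σ : V → Bool, (∀ u ∉ (∅ : Finset V), σ u = τ u) ↔ σ = τ := by
      simp [funext_iff]
    simp only [he, Finset.prod_empty]
    rw [Finset.sum_ite_eq' Finset.univ τ f]
    by_cases hτ : τ ∈ A
    · have h1 : ∀ σ : V → Bool, (σ = τ ∧ σ ∈ A) ↔ σ = τ := by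
        intro σ; constructor
        · exact fun h => h.1
        · exact fun h => ⟨h, h ▸ hτ⟩
      simp only [h1]
      rw [Finset.sum_ite_eq' Finset.univ τ f, Finset.sum_ite_eq' Finset.univ τ (fun _ => (1:ℝ))]
      simp
    · have h1 : ∀ σ : V → Bool, ¬(σ = τ ∧ σ ∈ A) := by
        rintro σ ⟨rfl, h⟩; exact hτ h
      simp [h1]
  | @insert v S' hv ih =>
    -- notation
    set τt := Function.update τ v true with hτt
    set τf := Function.update τ v false with hτf
    have hvt : ∀ σ : V → Bool, (∀ u ∉ S', σ u = τt u) → σ v = true := by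
      intro σ h; have := h v hv; rwa [hτt, Function.update_self] at this
    have hvf : ∀ σ : V → Bool, (∀ u ∉ S', σ u = τf u) → σ v = false := by
      intro σ h; have := h v hv; rwa [hτf, Function.update_self] at this
    have hsplit : ∀ σ : V → Bool,
        (∀ u ∉ insert v S', σ u = τ u) ↔ (∀ u ∉ S', σ u = Function.update τ v (σ v) u) := by
      intro σ; constructor
      · intro h u hu
        rcases eq_or_ne u v with rfl | hne
        · simp
        · rw [Function.update_of_ne hne]
          exact h u (by simp [hu, hne])
      · intro h u hu
        have h1 : u ≠ v := fun e => hu (e ▸ Finset.mem_insert_self v S')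
        have h2 : u ∉ S' := fun e => hu (Finset.mem_insert_of_mem e)
        have := h u h2; rwa [Function.update_of_ne h1] at this
    have hsplit2 : ∀ (Q : (V → Bool) → Prop) (_ : DecidablePred Q) (g : (V → Bool) → ℝ),
        (∑ σ : V → Bool, if (∀ u ∉ insert v S', σ u = τ u) ∧ Q σ then g σ else 0)
        = (∑ σ : V → Bool, if (∀ u ∉ S', σ u = τt u) ∧ Q σ then g σ else 0)
          + (∑ σ : V → Bool, if (∀ u ∉ S', σ u = τf u) ∧ Q σ then g σ else 0) := by
      intro Q _ g
      rw [← Finset.sum_add_distrib]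
      refine Finset.sum_congr rfl fun σ _ => ?_
      cases hb : σ v with
      | false =>
        have e1 : (∀ u ∉ insert v S', σ u = τ u) ↔ (∀ u ∉ S', σ u = τf u) := by
          rw [hsplit σ, hb, hτf]
        have e2 : ¬((∀ u ∉ S', σ u = τt u) ∧ Q σ) := by
          rintro ⟨h, -⟩
          have := hvt σ h; rw [hb] at this; exact Bool.false_ne_true this
        rw [if_neg e2, zero_add, if_congr (and_congr_left fun _ => e1) rfl rfl]
      | true =>
        have e1 : (∀ u ∉ insert v S', σ u = τ u) ↔ (∀ u ∉ S', σ u = τt u) := by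
          rw [hsplit σ, hb, hτt]
        have e2 : ¬((∀ u ∉ S', σ u = τf u) ∧ Q σ) := by
          rintro ⟨h, -⟩
          have := hvf σ h; rw [hb] at this; simp at this
        rw [if_neg e2, add_zero, if_congr (and_congr_left fun _ => e1) rfl rfl]
    have hcond' : ∀ u ∈ S', ∀ η : V → Bool,
        p * f (Function.update η u false) ≤ (1 - p) * f (Function.update η u true) :=
      fun u hu => hcond u (Finset.mem_insert_of_mem hu)
    -- the six quantities
    set Fp := ∑ σ : V → Bool, if ∀ u ∉ S', σ u = τt u then f σ else 0 with hFp
    set Fm := ∑ σ : V → Bool, if ∀ u ∉ S', σ u = τf u then f σ else 0 with hFm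
    set ap := ∑ σ : V → Bool, if (∀ u ∉ S', σ u = τt u) ∧ σ ∈ A then f σ else 0 with hap
    set am := ∑ σ : V → Bool, if (∀ u ∉ S', σ u = τf u) ∧ σ ∈ A then f σ else 0 with ham
    set Gp := ∑ σ : V → Bool, if (∀ u ∉ S', σ u = τt u) ∧ σ ∈ A
        then ∏ u ∈ S', (if σ u then p else 1 - p) else 0 with hGp
    set Gm := ∑ σ : V → Bool, if (∀ u ∉ S', σ u = τf u) ∧ σ ∈ A
        then ∏ u ∈ S', (if σ u then p else 1 - p) else 0 with hGm
    -- rewrite goal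
    have goal1 : (∑ σ : V → Bool, if ∀ u ∉ insert v S', σ u = τ u then f σ else 0) = Fp + Fm := by
      have := hsplit2 (fun _ => True) (fun _ => instDecidableTrue) f
      simpa using this
    have goal2 : (∑ σ : V → Bool, if (∀ u ∉ insert v S', σ u = τ u) ∧ σ ∈ A then f σ else 0)
        = ap + am := hsplit2 (· ∈ A) _ f
    have prodt : ∀ σ : V → Bool, (∀ u ∉ S', σ u = τt u) →
        ∏ u ∈ insert v S', (if σ u then p else 1 - p) = p * ∏ u ∈ S', (if σ u then p else 1 - p) := by
      intro σ h
      rw [Finset.prod_insert hv, hvt σ h]; simp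
    have prodf : ∀ σ : V → Bool, (∀ u ∉ S', σ u = τf u) →
        ∏ u ∈ insert v S', (if σ u then p else 1 - p)
          = (1 - p) * ∏ u ∈ S', (if σ u then p else 1 - p) := by
      intro σ h
      rw [Finset.prod_insert hv, hvf σ h]; simp
    have goal3 : (∑ σ : V → Bool, if (∀ u ∉ insert v S', σ u = τ u) ∧ σ ∈ A
          then ∏ u ∈ insert v S', (if σ u then p else 1 - p) else 0)
        = p * Gp + (1 - p) * Gm := by
      rw [hsplit2 (· ∈ A) _ (fun σ => ∏ u ∈ insert v S', (if σ u then p else 1 - p))]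
      congr 1
      · rw [hGp, Finset.mul_sum]
        refine Finset.sum_congr rfl fun σ _ => ?_
        by_cases h : (∀ u ∉ S', σ u = τt u) ∧ σ ∈ A
        · rw [if_pos h, if_pos h, prodt σ h.1]
        · rw [if_neg h, if_neg h, mul_zero]
      · rw [hGm, Finset.mul_sum]
        refine Finset.sum_congr rfl fun σ _ => ?_
        by_cases h : (∀ u ∉ S', σ u = τf u) ∧ σ ∈ A
        · rw [if_pos h, if_pos h, prodf σ h.1]
        · rw [if_neg h, if_neg h, mul_zero]
    rw [goal1, goal2, goal3]
    -- induction hypotheses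
    have ihp : Fp * Gp ≤ ap := ih hcond' τt
    have ihm : Fm * Gm ≤ am := ih hcond' τf
    -- reindexing along the flip at v
    have hflip := flip_invol v
    have hbijsum : ∀ g : (V → Bool) → ℝ,
        (∑ σ : V → Bool, g σ)
          = ∑ σ : V → Bool, g (Function.update σ v (!σ v)) :=
      fun g => (Fintype.sum_bijective _ hflip.bijective _ g (fun _ => rfl)).symm
    have hmapPf : ∀ σ : V → Bool, (∀ u ∉ S', σ u = τf u) →
        (∀ u ∉ S', Function.update σ v (!σ v) u = τt u) := by
      intro σ h u hu
      rcases eq_or_ne u v with rfl | hne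
      · rw [Function.update_self, hvf σ h, hτt, Function.update_self]; rfl
      · rw [Function.update_of_ne hne, h u hu, hτf, hτt,
          Function.update_of_ne hne, Function.update_of_ne hne]
    -- h1 : p * Fm ≤ (1-p) * Fp
    have h1 : p * Fm ≤ (1 - p) * Fp := by
      rw [hFp, hbijsum (fun σ => if ∀ u ∉ S', σ u = τt u then f σ else 0), hFm,
        Finset.mul_sum, Finset.mul_sum]
      refine Finset.sum_le_sum fun σ _ => ?_
      by_cases h : ∀ u ∉ S', σ u = τf u
      · rw [if_pos h, if_pos (hmapPf σ h)]
        have hb : σ v = false := hvf σ h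
        have hσ : Function.update σ v false = σ := by
          rw [← hb]; exact Function.update_eq_self v σ
        have hnb : (!σ v) = true := by rw [hb]; rfl
        have := hcond v (Finset.mem_insert_self v S') σ
        rw [hσ] at this
        rw [hnb]
        exact this
      · rw [if_neg h, mul_zero]
        have : (0:ℝ) ≤ if ∀ u ∉ S', Function.update σ v (!σ v) u = τt u
            then f (Function.update σ v (!σ v)) else 0 := by
          split
          exacts [hf _, le_rfl]
        nlinarith
    -- h2 : Gm ≤ Gp
    have h2 : Gm ≤ Gp := by
      rw [hGp, hbijsum (fun σ => if (∀ u ∉ S', σ u = τt u) ∧ σ ∈ A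
        then ∏ u ∈ S', (if σ u then p else 1 - p) else 0), hGm]
      refine Finset.sum_le_sum fun σ _ => ?_
      by_cases h : (∀ u ∉ S', σ u = τf u) ∧ σ ∈ A
      · have hb : σ v = false := hvf σ h.1
        have hmem : Function.update σ v (!σ v) ∈ A := by
          refine hA σ _ h.2 fun u => ?_
          rcases eq_or_ne u v with rfl | hne
          · rw [Function.update_self, hb]; exact Bool.false_le _
          · rw [Function.update_of_ne hne]
        rw [if_pos h, if_pos ⟨hmapPf σ h.1, hmem⟩]
        refine le_of_eq (Finset.prod_congr rfl fun u hu => ?_)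
        have hne : u ≠ v := fun e => hv (e ▸ hu)
        rw [Function.update_of_ne hne]
      · rw [if_neg h]
        by_cases h' : (∀ u ∉ S', Function.update σ v (!σ v) u = τt u)
            ∧ Function.update σ v (!σ v) ∈ A
        · rw [if_pos h']
          refine Finset.prod_nonneg fun u _ => ?_
          split <;> linarith
        · rw [if_neg h']
    -- nonnegativity
    have hFp0 : 0 ≤ Fp := Finset.sum_nonneg fun σ _ => by
      split
      exacts [hf σ, le_rfl]
    have hFm0 : 0 ≤ Fm := Finset.sum_nonneg fun σ _ => by
      split
      exacts [hf σ, le_rfl]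
    have hGm0 : 0 ≤ Gm := Finset.sum_nonneg fun σ _ => by
      split
      · exact Finset.prod_nonneg fun u _ => by split <;> linarith
      · exact le_refl 0
    nlinarith [mul_nonneg (sub_nonneg.2 h2) (sub_nonneg.2 h1), ihp, ihm]
open Real Finset

lemma domination {V : Type*} [Fintype V] [DecidableEq V] (p : ℝ) (hp : 0 < p) (hp' : p < 1)
    (f : (V → Bool) → ℝ) (hf : ∀ σ, 0 ≤ f σ)
    (A : Set (V → Bool)) [DecidablePred (· ∈ A)]
    (hA : ∀ ω ω' : V → Bool, ω ∈ A → ω ≤ ω' → ω' ∈ A)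
    (hcond : ∀ (v : V) (η : V → Bool),
      p * f (Function.update η v false) ≤ (1 - p) * f (Function.update η v true)) :
    (∑ σ : V → Bool, f σ) *
      (∑ σ : V → Bool, if σ ∈ A then bernoulliMeasure p σ else 0)
      ≤ ∑ σ : V → Bool, if σ ∈ A then f σ else 0 := by
  have h := key_ind p hp hp' f hf A hA Finset.univ (fun v _ η => hcond v η) (fun _ => true)
  simp only [Finset.mem_univ, not_true_eq_false, false_implies, implies_true, true_and,
    if_true] at h
  exact h

lemma ising_ratio {V : Type*} [Fintype V] [DecidableEq V]
    (E : Finset (V × V)) (d : ℕ) (J : ℝ) (hJ : 0 ≤ J)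
    (hdeg : ∀ v : V, (E.filter (fun e => e.1 = v ∨ e.2 = v)).card ≤ d)
    (v : V) (η : V → Bool) (b : Bool) :
    Real.exp (-(2*d*J)) * isingWeight E J (Function.update η v (!b))
      ≤ isingWeight E J (Function.update η v b) := by
  have habs : ∀ (σ : V → Bool) (e : V × V),
      -1 ≤ spin (σ e.1) * spin (σ e.2) ∧ spin (σ e.1) * spin (σ e.2) ≤ 1 := by
    intro σ e
    unfold spin
    cases σ e.1 <;> cases σ e.2 <;> norm_num
  have hD : -(2*(d:ℝ)) ≤
      (∑ e ∈ E, spin (Function.update η v b e.1) * spin (Function.update η v b e.2))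
      - ∑ e ∈ E, spin (Function.update η v (!b) e.1) * spin (Function.update η v (!b) e.2) := by
    rw [← Finset.sum_sub_distrib]
    rw [← Finset.sum_filter_of_ne (p := fun e : V × V => e.1 = v ∨ e.2 = v)
      (fun e _ hne => by
        by_contra hc
        rw [not_or] at hc
        obtain ⟨hc1, hc2⟩ := hc
        apply hne
        rw [Function.update_of_ne hc1, Function.update_of_ne hc2,
          Function.update_of_ne hc1, Function.update_of_ne hc2, sub_self])]
    calc -(2*(d:ℝ))
        ≤ -(2 * ((E.filter (fun e => e.1 = v ∨ e.2 = v)).card : ℝ)) := by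
          have := hdeg v
          have : ((E.filter (fun e => e.1 = v ∨ e.2 = v)).card : ℝ) ≤ (d : ℝ) :=
            Nat.cast_le.2 this
          linarith
      _ = ∑ _e ∈ E.filter (fun e => e.1 = v ∨ e.2 = v), (-2 : ℝ) := by
          rw [Finset.sum_const, nsmul_eq_mul]; ring
      _ ≤ _ := Finset.sum_le_sum fun e _ => by
          have h1 := habs (Function.update η v b) e
          have h2 := habs (Function.update η v (!b)) e
          linarith [h1.1, h2.2]
  unfold isingWeight
  rw [← Real.exp_add]
  apply Real.exp_le_exp.2
  have := mul_le_mul_of_nonneg_left hD hJ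
  nlinarith

lemma numeric_bound (x p : ℝ) (hp : p * (Real.exp x + Real.exp (-x)) < Real.exp (-x)) :
    p ≤ (1 - p) * Real.exp (-(2*x)) := by
  have ha : (0:ℝ) < Real.exp x := Real.exp_pos x
  have hb : (0:ℝ) < Real.exp (-x) := Real.exp_pos _
  have hab : Real.exp x * Real.exp (-x) = 1 := by
    rw [← Real.exp_add]; simp
  have h2 : Real.exp (-(2*x)) = Real.exp (-x) * Real.exp (-x) := by
    rw [← Real.exp_add]; ring_nf
  rw [h2]
  nlinarith [mul_lt_mul_of_pos_right hp hb]

theorem stmt12 {V : Type*} [Fintype V] [DecidableEq V]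
    (E : Finset (V × V)) (d : ℕ) (J : ℝ) (hJ : 0 ≤ J)
    (hdeg : ∀ v : V, (E.filter (fun e => e.1 = v ∨ e.2 = v)).card ≤ d)
    (p₁ p₂ : ℝ) (hp₁ : 0 < p₁) (hp₁' : p₁ < 1) (hp₂ : 0 < p₂) (hp₂' : p₂ < 1)
    (h₂ : p₂ < exp (-(d*J)) / (exp (d*J) + exp (-(d*J))))
    (h₁ : exp (d*J) / (exp (d*J) + exp (-(d*J))) < p₁)
    (μ : (V → Bool) → ℝ)
    (hμ : ∀ σ, μ σ = isingWeight E J σ / ∑ τ : V → Bool, isingWeight E J τ)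
    (A : Set (V → Bool)) [DecidablePred (· ∈ A)]
    (hA : ∀ ω ω' : V → Bool, ω ∈ A → ω ≤ ω' → ω' ∈ A) :
    ∑ σ ∈ Finset.univ.filter (· ∈ A), bernoulliMeasure p₂ σ ≤
      ∑ σ ∈ Finset.univ.filter (· ∈ A), μ σ ∧
    ∑ σ ∈ Finset.univ.filter (· ∈ A), μ σ ≤
      ∑ σ ∈ Finset.univ.filter (· ∈ A), bernoulliMeasure p₁ σ := by
  set Z := ∑ τ : V → Bool, isingWeight E J τ with hZdef
  have hZ : 0 < Z :=
    Finset.sum_pos (fun τ _ => Real.exp_pos _) ⟨fun _ => true, Finset.mem_univ _⟩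
  have hab : 0 < Real.exp ((d:ℝ)*J) + Real.exp (-((d:ℝ)*J)) := by positivity
  have hexp : Real.exp (-(2*((d:ℝ)*J))) = Real.exp (-(2*(d:ℝ)*J)) := by
    congr 1; ring
  -- conditional bounds for the Ising weight
  have hcond₂ : ∀ (v : V) (η : V → Bool),
      p₂ * isingWeight E J (Function.update η v false)
        ≤ (1 - p₂) * isingWeight E J (Function.update η v true) := by
    intro v η
    have hr := ising_ratio E d J hJ hdeg v η true
    rw [show (!true) = false from rfl] at hr
    have hn : p₂ ≤ (1 - p₂) * Real.exp (-(2*((d:ℝ)*J))) := by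
      apply numeric_bound
      calc p₂ * (Real.exp ((d:ℝ)*J) + Real.exp (-((d:ℝ)*J)))
          < (Real.exp (-((d:ℝ)*J)) / (Real.exp ((d:ℝ)*J) + Real.exp (-((d:ℝ)*J)))) *
            (Real.exp ((d:ℝ)*J) + Real.exp (-((d:ℝ)*J))) := mul_lt_mul_of_pos_right h₂ hab
        _ = Real.exp (-((d:ℝ)*J)) := div_mul_cancel₀ _ hab.ne'
    rw [hexp] at hn
    have hw0 : 0 ≤ isingWeight E J (Function.update η v false) := (Real.exp_pos _).le
    calc p₂ * isingWeight E J (Function.update η v false)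
        ≤ ((1 - p₂) * Real.exp (-(2*(d:ℝ)*J))) * isingWeight E J (Function.update η v false) :=
          mul_le_mul_of_nonneg_right hn hw0
      _ = (1 - p₂) * (Real.exp (-(2*(d:ℝ)*J)) * isingWeight E J (Function.update η v false)) := by
          ring
      _ ≤ (1 - p₂) * isingWeight E J (Function.update η v true) :=
          mul_le_mul_of_nonneg_left hr (by linarith)
  have hcond₁ : ∀ (v : V) (η : V → Bool),
      (1 - p₁) * isingWeight E J (Function.update η v true)
        ≤ p₁ * isingWeight E J (Function.update η v false) := by
    intro v η
    have hr := ising_ratio E d J hJ hdeg v η false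
    rw [show (!false) = true from rfl] at hr
    have hn : (1 - p₁) ≤ p₁ * Real.exp (-(2*((d:ℝ)*J))) := by
      have h := numeric_bound ((d:ℝ)*J) (1 - p₁) ?_
      · have e1 : (1 - (1 - p₁)) = p₁ := by ring
        rwa [e1] at h
      · have h' : Real.exp ((d:ℝ)*J)
            < p₁ * (Real.exp ((d:ℝ)*J) + Real.exp (-((d:ℝ)*J))) := by
          have := mul_lt_mul_of_pos_right h₁ hab
          rwa [div_mul_cancel₀ _ hab.ne'] at this
        nlinarith
    rw [hexp] at hn
    have hw0 : 0 ≤ isingWeight E J (Function.update η v true) := (Real.exp_pos _).le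
    calc (1 - p₁) * isingWeight E J (Function.update η v true)
        ≤ (p₁ * Real.exp (-(2*(d:ℝ)*J))) * isingWeight E J (Function.update η v true) :=
          mul_le_mul_of_nonneg_right hn hw0
      _ = p₁ * (Real.exp (-(2*(d:ℝ)*J)) * isingWeight E J (Function.update η v true)) := by ring
      _ ≤ p₁ * isingWeight E J (Function.update η v false) :=
          mul_le_mul_of_nonneg_left hr (by linarith)
  -- μ sums
  have hμsum : ∀ (B : (V → Bool) → Prop) (_ : DecidablePred B),
      (∑ σ : V → Bool, if B σ then μ σ else 0)
        = (∑ σ : V → Bool, if B σ then isingWeight E J σ else 0) / Z := by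
    intro B _
    rw [Finset.sum_div]
    refine Finset.sum_congr rfl fun σ _ => ?_
    by_cases h : B σ
    · rw [if_pos h, if_pos h, hμ σ]
    · rw [if_neg h, if_neg h, zero_div]
  constructor
  · -- lower bound
    have hdom₂ := domination p₂ hp₂ hp₂' (isingWeight E J) (fun σ => (Real.exp_pos _).le)
      A hA hcond₂
    rw [Finset.sum_filter, Finset.sum_filter, hμsum (· ∈ A) inferInstance, le_div_iff₀ hZ]
    nlinarith [hdom₂]
  · -- upper bound via spin flip
    have hνtot : ∑ σ : V → Bool, bernoulliMeasure p₁ σ = 1 := by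
      unfold bernoulliMeasure
      rw [← Fintype.prod_sum (fun (_ : V) (b : Bool) => if b then p₁ else 1 - p₁)]
      have h1 : ∀ v : V, (∑ b : Bool, if b then p₁ else (1-p₁)) = 1 := by
        intro v
        rw [Fintype.sum_bool]
        simp
      rw [Finset.prod_congr rfl fun v _ => h1 v, Finset.prod_const_one]
    have hsplitc : ∀ g : (V → Bool) → ℝ,
        (∑ σ : V → Bool, if σ ∈ A then g σ else 0)
          + (∑ σ : V → Bool, if σ ∉ A then g σ else 0) = ∑ σ : V → Bool, g σ := by
      intro g
      rw [← Finset.sum_add_distrib]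
      refine Finset.sum_congr rfl fun σ _ => ?_
      by_cases h : σ ∈ A
      · rw [if_pos h, if_neg (not_not_intro h), add_zero]
      · rw [if_neg h, if_pos h, zero_add]
    have hflipinv : ∀ σ : V → Bool, (fun u => !(!(σ u))) = σ := fun σ => by
      funext u; simp
    set A' : Set (V → Bool) := {σ | (fun u => !(σ u)) ∉ A} with hA'def
    haveI : DecidablePred (· ∈ A') := fun σ =>
      @instDecidableNot _ (inferInstanceAs (Decidable ((fun u => !(σ u)) ∈ A)))
    have hA'mono : ∀ ω ω' : V → Bool, ω ∈ A' → ω ≤ ω' → ω' ∈ A' := by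
      intro ω ω' hω hle hmem
      refine hω (hA _ _ hmem fun u => ?_)
      have h := hle u
      revert h
      cases ω u <;> cases ω' u <;> simp
    have hupdflip : ∀ (η : V → Bool) (v : V) (b : Bool),
        (fun u => !(Function.update η v b u)) = Function.update (fun u => !(η u)) v (!b) := by
      intro η v b; funext u
      rcases eq_or_ne u v with rfl | h
      · rw [Function.update_self, Function.update_self]
      · rw [Function.update_of_ne h, Function.update_of_ne h]
    have hcond' : ∀ (v : V) (η : V → Bool),
        (1 - p₁) * isingWeight E J (fun u => !(Function.update η v false u))
          ≤ (1 - (1 - p₁)) * isingWeight E J (fun u => !(Function.update η v true u)) := by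
      intro v η
      rw [hupdflip, hupdflip]
      have h := hcond₁ v (fun u => !(η u))
      have e1 : (1 - (1 - p₁)) = p₁ := by ring
      rw [e1]
      simpa using h
    have hdom₁ := domination (1 - p₁) (by linarith) (by linarith)
      (fun σ => isingWeight E J (fun u => !(σ u))) (fun σ => (Real.exp_pos _).le)
      A' hA'mono hcond'
    have hebij : Function.Bijective (fun σ : V → Bool => (fun u => !(σ u))) :=
      Function.Involutive.bijective (fun σ => hflipinv σ)
    have s1 : (∑ σ : V → Bool, isingWeight E J (fun u => !(σ u))) = Z :=
      Fintype.sum_bijective _ hebij _ _ (fun σ => rfl)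
    have s2 : (∑ σ : V → Bool, if σ ∈ A' then isingWeight E J (fun u => !(σ u)) else 0)
        = ∑ σ : V → Bool, if σ ∉ A then isingWeight E J σ else 0 := by
      refine Fintype.sum_bijective _ hebij _ _ fun σ => ?_
      by_cases h : (fun u => !(σ u)) ∈ A
      · rw [if_neg (show σ ∉ A' from fun hc => hc h), if_neg (not_not_intro h)]
      · rw [if_pos (show σ ∈ A' from h), if_pos h]
    have s3 : (∑ σ : V → Bool, if σ ∈ A' then bernoulliMeasure (1 - p₁) σ else 0)
        = ∑ σ : V → Bool, if σ ∉ A then bernoulliMeasure p₁ σ else 0 := by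
      refine Fintype.sum_bijective _ hebij _ _ fun σ => ?_
      have hb : bernoulliMeasure p₁ (fun u => !(σ u)) = bernoulliMeasure (1 - p₁) σ := by
        unfold bernoulliMeasure
        refine Finset.prod_congr rfl fun u _ => ?_
        cases h : σ u <;> simp [h] <;> ring
      by_cases h : (fun u => !(σ u)) ∈ A
      · rw [if_neg (show σ ∉ A' from fun hc => hc h), if_neg (not_not_intro h)]
      · rw [if_pos (show σ ∈ A' from h), if_pos h, hb]
    rw [s1, s2, s3] at hdom₁
    -- hdom₁ : Z * (∑ if ∉ A, ν₁) ≤ ∑ if ∉ A, isingWeight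
    have hwtot := hsplitc (isingWeight E J)
    have hνsplit := hsplitc (bernoulliMeasure p₁)
    rw [hνtot] at hνsplit
    rw [Finset.sum_filter, Finset.sum_filter, hμsum (· ∈ A) inferInstance, div_le_iff₀ hZ]
    nlinarith [hdom₁, hwtot, hνsplit]
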